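/- arXiv:1011.1655 — 4 statements merged into one kernel-verified Lean document; each statement's English description precedes it below -/
import Mathlib

section
/- Let $k \subseteq k'$ be a field extension and let $p(x_0,\ldots,x_n)$ be a nonzero polynomial over $k'$. Then there exists a nonzero polynomial $f(x_0,\ldots,x_n)$ over $k$ such that for all $y_0,\ldots,y_n \in k$, if $f(y_0,\ldots,y_n) \neq 0$ then $p(y_0,\ldots,y_n) \neq 0$. -/
/-- For a field extension `k ⊆ k'` and a nonzero polynomial `p` over `k'`
in variables `x_0, …, x_n`, there is a nonzero polynomial `f` over `k` such that any
`k`-point where `f` does not vanish is a point where `p` does not vanish. -/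
theorem stmt0 (k k' : Type*) [Field k] [Field k'] [Algebra k k']
    (n : ℕ) (p : MvPolynomial (Fin (n + 1)) k') (hp : p ≠ 0) :
    ∃ f : MvPolynomial (Fin (n + 1)) k, f ≠ 0 ∧
      ∀ y : Fin (n + 1) → k,
        MvPolynomial.eval y f ≠ 0 →
        MvPolynomial.eval (fun i => algebraMap k k' (y i)) p ≠ 0 := by
  classical
  set b := Module.Basis.ofVectorSpace k k' with hb
  -- for each basis index j, the "j-th component" polynomial over k
  set F : _ → MvPolynomial (Fin (n + 1)) k :=
    fun j => ∑ m ∈ p.support, MvPolynomial.monomial m (b.repr (p.coeff m) j) with hF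
  -- key identity
  have key : ∀ (y : Fin (n + 1) → k) j,
      b.repr (MvPolynomial.eval (fun i => algebraMap k k' (y i)) p) j =
        MvPolynomial.eval y (F j) := by
    intro y j
    rw [MvPolynomial.eval_eq]
    have : ∀ m ∈ p.support,
        p.coeff m * ∏ i ∈ m.support, (algebraMap k k' (y i)) ^ m i =
          (∏ i ∈ m.support, (y i) ^ m i) • p.coeff m := by
      intro m _
      rw [Algebra.smul_def, mul_comm]
      congr 1
      rw [map_prod]
      exact Finset.prod_congr rfl fun i _ => by rw [map_pow]
    rw [Finset.sum_congr rfl this, map_sum, Finset.sum_apply']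
    rw [hF]
    simp only [map_sum, MvPolynomial.eval_monomial]
    refine Finset.sum_congr rfl fun m _ => ?_
    rw [map_smul, Finsupp.smul_apply, smul_eq_mul, mul_comm, Finsupp.prod]
  -- choose a good index
  obtain ⟨m, hm⟩ := MvPolynomial.ne_zero_iff.mp hp
  have : b.repr (p.coeff m) ≠ 0 := by
    intro h
    apply hm
    have h2 := congrArg b.repr.symm h
    simpa using h2
  obtain ⟨j, hj⟩ := Finsupp.ne_iff.mp this
  simp only [Finsupp.coe_zero, Pi.zero_apply] at hj
  refine ⟨F j, ?_, ?_⟩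
  · intro h
    apply hj
    have := congrArg (MvPolynomial.coeff m) h
    rw [hF] at this
    simp only [MvPolynomial.coeff_zero, MvPolynomial.coeff_sum,
      MvPolynomial.coeff_monomial] at this
    rwa [Finset.sum_eq_single m (fun m' _ h' => if_neg h') (fun h' => absurd hm
      (by simpa [MvPolynomial.mem_support_iff] using h')), if_pos rfl] at this
  · intro y hy hzero
    apply hy
    rw [← key y j, hzero, map_zero, Finsupp.coe_zero, Pi.zero_apply]
end

section
/- Let $\Gamma$ be a linearly ordered abelian group and $\{\gamma_\eta\}$ a strictly increasing sequence in $\Gamma$ indexed by a linear order. Let $c_1 + n_1 x, \ldots, c_m + n_m x$ be finitely many affine functions with $c_i \in \Gamma$ and the coefficients $n_i$ lying in an ordered ring acting on $\Gamma$ in an order-preserving way, with the $n_i$ pairwise distinct. Then there is an index $\mu$ and a permutation $i_1,\ldots,i_m$ of $\{1,\ldots,m\}$ such that for all $\eta > \mu$: $c_{i_1} + n_{i_1}\gamma_\eta < c_{i_2} + n_{i_2}\gamma_\eta < \cdots < c_{i_m} + n_{i_m}\gamma_\eta$. -/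
/-!
For distinct slopes `r < s`, the difference `(d + s • γ η) - (c + r • γ η)` is strictly increasing
in `η`, so past some index it has a constant strict sign. Beyond the finitely many indices obtained
this way, the order between any two of the affine functions evaluated at `γ η` no longer depends on
`η`, and the permutation sorting their values at one such index sorts them at all later ones.
-/

open Filter

lemma PosSMulStrictMono.of_smul_pos {R M : Type*} [Ring R] [PartialOrder R] [AddCommGroup M]
    [PartialOrder M] [IsOrderedAddMonoid M] [Module R M]
    (h : ∀ (r : R) (x : M), 0 < r → 0 < x → 0 < r • x) : PosSMulStrictMono R M where
  smul_lt_smul_of_pos_left r hr x y hxy := by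
    simpa [sub_pos, smul_sub] using h r (y - x) hr (sub_pos.2 hxy)

lemma StrictMono.eventually_gt_or_eventually_lt {ι β : Type*} [Preorder ι] [NoMaxOrder ι]
    [LinearOrder β] {g : ι → β} (hg : StrictMono g) (a : β) :
    (∀ᶠ η in atTop, a < g η) ∨ ∀ᶠ η in atTop, g η < a := by
  by_cases h : ∃ η₀, a ≤ g η₀
  · obtain ⟨η₀, h₀⟩ := h
    exact .inl ((eventually_gt_atTop η₀).mono fun η hη => h₀.trans_lt (hg hη))
  · push Not at h
    exact .inr (.of_forall h)

section Affine

variable {R Γ ι : Type*} [Ring R] [LinearOrder R] [IsOrderedAddMonoid R]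
  [AddCommGroup Γ] [LinearOrder Γ] [IsOrderedAddMonoid Γ] [Module R Γ] [PosSMulStrictMono R Γ]
  [Preorder ι] [NoMaxOrder ι] {γ : ι → Γ}

lemma StrictMono.eventually_affine_lt_or_gt_of_lt (hγ : StrictMono γ) (c d : Γ) {r s : R}
    (hrs : r < s) :
    (∀ᶠ η in atTop, c + r • γ η < d + s • γ η) ∨ ∀ᶠ η in atTop, d + s • γ η < c + r • γ η := by
  have hmono : StrictMono fun η => (s - r) • γ η := hγ.const_smul (sub_pos.2 hrs)
  have key : ∀ x : Γ, (c - d < (s - r) • x ↔ c + r • x < d + s • x) ∧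
      ((s - r) • x < c - d ↔ d + s • x < c + r • x) := fun x => by
    rw [sub_smul, sub_lt_sub_iff, sub_lt_sub_iff, add_comm d]
    exact ⟨.rfl, .rfl⟩
  rcases hmono.eventually_gt_or_eventually_lt (c - d) with h | h
  · exact .inl (h.mono fun η => (key (γ η)).1.1)
  · exact .inr (h.mono fun η => (key (γ η)).2.1)

lemma StrictMono.eventually_affine_lt_or_gt_of_ne (hγ : StrictMono γ) (c d : Γ) {r s : R}
    (hrs : r ≠ s) :
    (∀ᶠ η in atTop, c + r • γ η < d + s • γ η) ∨ ∀ᶠ η in atTop, d + s • γ η < c + r • γ η := by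
  rcases hrs.lt_or_gt with h | h
  · exact hγ.eventually_affine_lt_or_gt_of_lt c d h
  · exact (hγ.eventually_affine_lt_or_gt_of_lt d c h).symm

end Affine

lemma exists_perm_eventually_strictMono {ι β : Type*} [LinearOrder β] {l : Filter ι} [l.NeBot]
    {m : ℕ} (f : Fin m → ι → β)
    (hf : ∀ i j, i ≠ j → (∀ᶠ η in l, f i η < f j η) ∨ ∀ᶠ η in l, f j η < f i η) :
    ∃ e : Equiv.Perm (Fin m), ∀ᶠ η in l, StrictMono fun k => f (e k) η := by
  have hstable : ∀ᶠ η in l, ∀ i j, (∀ᶠ η' in l, f i η' < f j η') → f i η < f j η := by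
    refine eventually_all.2 fun i => eventually_all.2 fun j => ?_
    by_cases hij : ∀ᶠ η' in l, f i η' < f j η'
    · exact hij.mono fun η h _ => h
    · exact .of_forall fun η h => absurd h hij
  obtain ⟨η₀, hη₀⟩ := hstable.exists
  refine ⟨Tuple.sort (f · η₀), hstable.mono fun η hη k k' hkk' => ?_⟩
  set e := Tuple.sort (f · η₀)
  have hsorted : f (e k) η₀ ≤ f (e k') η₀ := Tuple.monotone_sort (f · η₀) hkk'.le
  rcases hf (e k) (e k') (e.injective.ne hkk'.ne) with h | h
  · exact hη _ _ h
  · exact absurd (hη₀ _ _ h) hsorted.not_gt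

/-- In an ordered module `Γ` over an ordered ring `R`, given a strictly
increasing sequence `γ_η` indexed by a linear order with no maximum and finitely many
affine functions `c_i + n_i • x` with pairwise distinct coefficients `n_i`, there is an
index `μ` and a permutation arranging the affine functions in strictly increasing order
at every `γ_η` with `η > μ`. -/
theorem stmt1 (R Γ ι : Type*) [CommRing R] [LinearOrder R] [IsStrictOrderedRing R]
    [AddCommGroup Γ] [LinearOrder Γ] [IsOrderedAddMonoid Γ]
    [Module R Γ]
    (hpos : ∀ (r : R) (x : Γ), 0 < r → 0 < x → 0 < r • x)
    [LinearOrder ι] [Nonempty ι] [NoMaxOrder ι]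
    (γ : ι → Γ) (hγ : StrictMono γ)
    (m : ℕ) (c : Fin m → Γ) (nc : Fin m → R) (hnc : Function.Injective nc) :
    ∃ (μ : ι) (e : Equiv.Perm (Fin m)),
      ∀ η, μ < η → StrictMono (fun i : Fin m => c (e i) + nc (e i) • γ η) := by
  have : PosSMulStrictMono R Γ := .of_smul_pos hpos
  obtain ⟨e, he⟩ := exists_perm_eventually_strictMono (fun i η => c i + nc i • γ η)
    fun i j hij => hγ.eventually_affine_lt_or_gt_of_ne (c i) (c j) (hnc.ne hij)
  obtain ⟨μ, hμ⟩ := eventually_atTop.1 he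
  exact ⟨μ, e, fun η hη => hμ η hη.le⟩
end

section
/- Let $\Gamma$ be a nontrivial linearly ordered abelian group equipped with an order-preserving automorphism $\gamma \mapsto \rho\cdot\gamma$ such that $\rho\cdot\gamma > n\gamma$ for all $n \in \mathbb{N}$ and all $\gamma > 0$ (the contractive case). Then for every linear difference operator $L(\gamma) = \sum_{i=0}^{n} a_i \rho^i\cdot\gamma$ with $a_i \in \mathbb{Z}$ and $a_n \neq 0$, and every $\gamma > 0$: $L(\gamma) > 0$ if and only if $a_n > 0$. -/
/-! Contractivity makes `ρ^n γ` exceed every integer combination of `γ, ρ γ, …, ρ^(n-1) γ` in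
absolute value. Hence in `L(γ) = S + a_n • ρ^n γ` the tail satisfies `|S| < ρ^n γ ≤ |a_n • ρ^n γ|`,
and the sign of `L(γ)` is the sign of `a_n`. -/

section Contractive

variable {Γ : Type*} {f : Γ → Γ}

theorem iterate_pos_of_nsmul_lt [AddMonoid Γ] [Preorder Γ]
    (hf : ∀ (n : ℕ) (γ : Γ), 0 < γ → n • γ < f γ) (k : ℕ)
    {γ : Γ} (hγ : 0 < γ) : 0 < f^[k] γ := by
  induction k with
  | zero => exact hγ
  | succ k ih =>
    rw [Function.iterate_succ_apply']
    simpa using hf 0 _ ih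

theorem monotone_iterate_of_nsmul_lt [AddMonoid Γ] [Preorder Γ]
    (hf : ∀ (n : ℕ) (γ : Γ), 0 < γ → n • γ < f γ)
    {γ : Γ} (hγ : 0 < γ) : Monotone fun k => f^[k] γ :=
  monotone_nat_of_le_succ fun k => by
    rw [Function.iterate_succ_apply']
    simpa using (hf 1 _ (iterate_pos_of_nsmul_lt hf k hγ)).le

/-- Each term is at most `|c i| • f^[m-1] γ`, and `f` beats every natural multiple. -/
theorem abs_sum_zsmul_iterate_lt [AddCommGroup Γ] [LinearOrder Γ] [IsOrderedAddMonoid Γ]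
    (hf : ∀ (n : ℕ) (γ : Γ), 0 < γ → n • γ < f γ) {m : ℕ} (c : Fin m → ℤ)
    {γ : Γ} (hγ : 0 < γ) : |∑ i : Fin m, c i • f^[i] γ| < f^[m] γ := by
  cases m with
  | zero => simpa using hγ
  | succ k =>
    have hpos := fun j => iterate_pos_of_nsmul_lt hf j hγ
    calc |∑ i : Fin (k + 1), c i • f^[i] γ|
        ≤ ∑ i : Fin (k + 1), |c i| • f^[i] γ := by
          refine (Finset.abs_sum_le_sum_abs _ _).trans (le_of_eq ?_)
          simp only [abs_zsmul, abs_of_pos (hpos _)]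
      _ ≤ ∑ i : Fin (k + 1), |c i| • f^[k] γ :=
          Finset.sum_le_sum fun i _ => zsmul_le_zsmul_right (abs_nonneg _)
            (monotone_iterate_of_nsmul_lt hf hγ (Nat.lt_succ_iff.mp i.isLt))
      _ = (∑ i : Fin (k + 1), (c i).natAbs) • f^[k] γ := by
          rw [← Finset.sum_smul, ← natCast_zsmul]
          push_cast
          rfl
      _ < f^[k + 1] γ := by
          rw [Function.iterate_succ_apply']
          exact hf _ _ (hpos k)

end Contractive

theorem pos_add_zsmul_iff_of_abs_lt {G : Type*} [AddCommGroup G] [LinearOrder G]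
    [IsOrderedAddMonoid G] {s x : G} {a : ℤ} (ha : a ≠ 0) (hs : |s| < x) :
    0 < s + a • x ↔ 0 < a := by
  have hx : 0 < x := (abs_nonneg s).trans_lt hs
  obtain ⟨hs_lower, hs_upper⟩ := abs_lt.mp hs
  constructor
  · intro h
    by_contra! ha_nonpos
    have hax : a • x ≤ (-1 : ℤ) • x := zsmul_le_zsmul_left hx.le (by omega)
    rw [neg_one_zsmul] at hax
    have hneg := add_lt_add_of_lt_of_le hs_upper hax
    rw [add_neg_cancel] at hneg
    exact h.not_gt hneg
  · intro ha_pos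
    have hax : (1 : ℤ) • x ≤ a • x := zsmul_le_zsmul_left hx.le ha_pos
    rw [one_zsmul] at hax
    simpa using add_lt_add_of_lt_of_le hs_lower hax

theorem stmt9_general (Γ : Type*) [AddCommGroup Γ] [LinearOrder Γ] [IsOrderedAddMonoid Γ]
    (ρ : Γ ≃o Γ)
    (hcontr : ∀ (n : ℕ) (γ : Γ), 0 < γ → n • γ < ρ γ) :
    ∀ (n : ℕ) (a : Fin (n + 1) → ℤ), a (Fin.last n) ≠ 0 →
      ∀ γ : Γ, 0 < γ →
        (0 < ∑ i : Fin (n + 1), a i • (⇑ρ)^[(i : ℕ)] γ ↔ 0 < a (Fin.last n)) := by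
  intro n a han γ hγ
  rw [Fin.sum_univ_castSucc]
  exact pos_add_zsmul_iff_of_abs_lt han
    (abs_sum_zsmul_iterate_lt hcontr (fun i => a i.castSucc) hγ)

/-- In a nontrivial ordered abelian group with a contractive
order-preserving automorphism `ρ` (i.e. `ρ γ > n γ` for all `n ∈ ℕ`, `γ > 0`), a linear
difference operator `L(γ) = ∑ a_i ρ^i γ` with `a_n ≠ 0` satisfies, for every `γ > 0`:
`L(γ) > 0 ↔ a_n > 0`. -/
theorem stmt9 (Γ : Type*) [AddCommGroup Γ] [LinearOrder Γ] [IsOrderedAddMonoid Γ]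
    (hΓ : ∃ γ : Γ, γ ≠ 0)
    (ρ : Γ ≃o Γ) (hρadd : ∀ a b : Γ, ρ (a + b) = ρ a + ρ b)
    (hcontr : ∀ (n : ℕ) (γ : Γ), 0 < γ → n • γ < ρ γ) :
    ∀ (n : ℕ) (a : Fin (n + 1) → ℤ), a (Fin.last n) ≠ 0 →
      ∀ γ : Γ, 0 < γ →
        (0 < ∑ i : Fin (n + 1), a i • (⇑ρ)^[(i : ℕ)] γ ↔ 0 < a (Fin.last n)) :=
  stmt9_general Γ ρ hcontr
end

section
/- Let $(K,\Gamma,k)$ be a valued difference field of equal characteristic zero with $v(\sigma(x)) = \rho\cdot v(x)$, and suppose the residue difference field $k$ is linear difference closed (i.e., for all $\alpha_0,\ldots,\alpha_n \in k$ not all zero, the equation $1 + \alpha_0 x + \alpha_1\bar\sigma(x) + \cdots + \alpha_n\bar\sigma^n(x) = 0$ has a solution in $k$). Then for every $d \in \mathbb{Z}_+$ there exists $a \in k$ with $\bar\sigma^d(a) \neq a$. -/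
/-- If the residue difference field `k` (characteristic zero, automorphism
`σ`) is linear difference closed, then for every `d ≥ 1` there is `a ∈ k` with
`σ^d(a) ≠ a`. -/
theorem stmt10 (k : Type*) [Field k] [CharZero k] (σ : k ≃+* k)
    (hlin : ∀ (n : ℕ) (α : Fin (n + 1) → k), (∃ i, α i ≠ 0) →
      ∃ x : k, 1 + ∑ i : Fin (n + 1), α i * (⇑σ)^[(i : ℕ)] x = 0) :
    ∀ d : ℕ, 0 < d → ∃ a : k, (⇑σ)^[d] a ≠ a := by
  intro d hd
  by_contra hcon
  push_neg at hcon
  set d' : Fin (d + 1) := ⟨d, Nat.lt_succ_self d⟩ with hd'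
  have hne : (0 : Fin (d + 1)) ≠ d' := by
    intro h
    have : (0 : ℕ) = d := congrArg Fin.val h
    omega
  obtain ⟨x, hx⟩ := hlin d
    (fun i => if i = 0 then 1 else if i = d' then -1 else 0)
    ⟨0, by simp⟩
  have hsum : ∑ i : Fin (d + 1),
      (if i = 0 then (1 : k) else if i = d' then -1 else 0) * (⇑σ)^[(i : ℕ)] x
      = x - (⇑σ)^[d] x := by
    rw [Finset.sum_eq_add_of_mem (0 : Fin (d + 1)) d'
      (Finset.mem_univ _) (Finset.mem_univ _) hne]
    · simp [hd', Fin.ext_iff, hd.ne, hd.ne']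
      ring
    · intro c _ hc
      simp only [hc.1, hc.2, if_false, zero_mul]
  rw [hsum, hcon x] at hx
  simp at hx
end
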